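/- arXiv:1705.08040 — 6 statements merged into one kernel-verified Lean document; each statement's English description precedes it below -/
import Mathlib

section
/- For the Z-channel with crossover probability φ ∈ (0,1), the mutual information I(ξ) = ξφ log φ − ξ(1−φ) log ξ − (1−ξ+ξφ) log(1−ξ+ξφ) is maximized over ξ ∈ [0,1] at ξ* = 1 / (φ^{φ/(φ−1)} − φ + 1). -/
open Real Set

/-!
In nats the mutual information is `ξ φ log φ + (1 - φ) η(ξ) + η(1 - ξ + ξ φ)` with
`η = negMulLog` concave, so it is concave in `ξ` and any interior critical point is a global
maximiser on `[0, 1]`. Its derivative `φ log φ + (1 - φ) log ((1 - ξ + ξ φ) / ξ)` vanishes exactly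
when `(1 - ξ + ξ φ) / ξ = φ ^ (φ / (φ - 1))`, which is solved by `ξ* = 1 / (φ ^ (φ / (φ - 1)) - φ + 1)`.
-/

theorem ConcaveOn.isMaxOn_of_hasDerivAt_eq_zero {S : Set ℝ} {f : ℝ → ℝ} {x : ℝ}
    (hf : ConcaveOn ℝ S f) (hx : x ∈ interior S) (hd : HasDerivAt f 0 x) : IsMaxOn f S x := by
  have hd' : derivWithin (fun y => -f y) (Ioi x) x = 0 :=
    (hd.neg.hasDerivWithinAt.derivWithin (uniqueDiffWithinAt_Ioi x)).trans neg_zero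
  simpa using (hf.neg.isMinOn_of_rightDeriv_eq_zero hx hd').neg

/-- The mutual information of the Z-channel in nats. -/
noncomputable def zChannelMutualInfo (φ ξ : ℝ) : ℝ :=
  ξ * φ * log φ + (1 - φ) * negMulLog ξ + negMulLog (1 - ξ + ξ * φ)

noncomputable def zChannelOptimalInput (φ : ℝ) : ℝ := 1 / (φ ^ (φ / (φ - 1)) - φ + 1)

theorem zChannelMutualInfo_div_log_two (φ ξ : ℝ) :
    zChannelMutualInfo φ ξ / log 2 = ξ * φ * logb 2 φ - ξ * (1 - φ) * logb 2 ξ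
      - (1 - ξ + ξ * φ) * logb 2 (1 - ξ + ξ * φ) := by
  simp only [zChannelMutualInfo, negMulLog, logb]
  ring

theorem concaveOn_zChannelMutualInfo {φ : ℝ} (hφ : φ ∈ Icc (0 : ℝ) 1) :
    ConcaveOn ℝ (Icc 0 1) (zChannelMutualInfo φ) := by
  have hlin : ConcaveOn ℝ (Icc 0 1) fun ξ => ξ * φ * log φ :=
    ((LinearMap.mulRight ℝ (φ * log φ)).concaveOn (convex_Icc 0 1)).congr
      fun ξ _ => (mul_assoc ξ φ (log φ)).symm
  have hself : ConcaveOn ℝ (Icc 0 1) fun ξ => (1 - φ) * negMulLog ξ :=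
    (concaveOn_negMulLog.subset Icc_subset_Ici_self (convex_Icc 0 1)).smul (sub_nonneg.2 hφ.2)
  have hout : ConcaveOn ℝ (Icc 0 1) fun ξ => negMulLog (1 - ξ + ξ * φ) := by
    have hmaps : Icc (0 : ℝ) 1 ⊆ AffineMap.lineMap (1 : ℝ) φ ⁻¹' Ici 0 := by
      rintro ξ ⟨h0, h1⟩
      simp only [mem_preimage, AffineMap.lineMap_apply_module, mem_Ici, smul_eq_mul, mul_one]
      nlinarith [hφ.1]
    refine ((concaveOn_negMulLog.comp_affineMap _).subset hmaps (convex_Icc 0 1)).congr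
      fun ξ _ => ?_
    simp only [Function.comp_apply, AffineMap.lineMap_apply_module, smul_eq_mul, mul_one]
  exact (hlin.add hself).add hout

theorem hasDerivAt_zChannelMutualInfo (φ : ℝ) {ξ : ℝ} (hξ : ξ ≠ 0) (hout : 1 - ξ + ξ * φ ≠ 0) :
    HasDerivAt (zChannelMutualInfo φ)
      (φ * log φ + (1 - φ) * (log (1 - ξ + ξ * φ) - log ξ)) ξ := by
  have hlin : HasDerivAt (fun ξ => 1 - ξ + ξ * φ) (φ - 1) ξ :=
    (((hasDerivAt_id ξ).const_sub 1).add ((hasDerivAt_id ξ).mul_const φ)).congr_deriv (by ring)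
  refine ((((hasDerivAt_id ξ).mul_const φ).mul_const (log φ)).add
    ((hasDerivAt_negMulLog hξ).const_mul (1 - φ)) |>.add
      ((hasDerivAt_negMulLog hout).comp ξ hlin)).congr_deriv ?_
  ring

theorem one_lt_rpow_div_sub_one {φ : ℝ} (hφ : φ ∈ Ioo (0 : ℝ) 1) : 1 < φ ^ (φ / (φ - 1)) :=
  (one_lt_rpow_iff_of_pos hφ.1).2 <| Or.inr ⟨hφ.2, div_neg_of_pos_of_neg hφ.1 (by linarith [hφ.2])⟩

theorem zChannelOptimalInput_mem_Ioo {φ : ℝ} (hφ : φ ∈ Ioo (0 : ℝ) 1) :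
    zChannelOptimalInput φ ∈ Ioo 0 1 := by
  have hD : 1 < φ ^ (φ / (φ - 1)) - φ + 1 := by linarith [one_lt_rpow_div_sub_one hφ, hφ.2]
  exact ⟨one_div_pos.2 (by linarith), (div_lt_one (by linarith)).2 hD⟩

theorem hasDerivAt_zChannelMutualInfo_optimalInput {φ : ℝ} (hφ : φ ∈ Ioo (0 : ℝ) 1) :
    HasDerivAt (zChannelMutualInfo φ) 0 (zChannelOptimalInput φ) := by
  set K := φ ^ (φ / (φ - 1)) with hK
  set ξ := zChannelOptimalInput φ
  have hK0 : 0 < K := by linarith [one_lt_rpow_div_sub_one hφ]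
  have hξ : 0 < ξ := (zChannelOptimalInput_mem_Ioo hφ).1
  have hout : 1 - ξ + ξ * φ = K * ξ := by
    have : K - φ + 1 ≠ 0 := by linarith [hφ.2]
    simp only [ξ, zChannelOptimalInput, ← hK]
    field_simp
    ring
  have hlogK : (1 - φ) * log K = -(φ * log φ) := by
    have : φ - 1 ≠ 0 := by linarith [hφ.2]
    rw [hK, log_rpow hφ.1]
    field_simp
    ring
  convert hasDerivAt_zChannelMutualInfo φ hξ.ne' (by rw [hout]; positivity) using 1
  rw [hout, log_mul hK0.ne' hξ.ne', add_sub_cancel_right, hlogK, add_neg_cancel]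

/-- For the Z-channel with crossover probability `φ ∈ (0,1)`, the mutual
information `I(ξ) = ξφ log φ − ξ(1−φ) log ξ − (1−ξ+ξφ) log(1−ξ+ξφ)` (base-2
logs, `0 log 0 = 0`) is maximized over `ξ ∈ [0,1]` at
`ξ* = 1 / (φ^{φ/(φ−1)} − φ + 1)`. -/
theorem zChannel_optimal_input
    (φ : ℝ) (hφ : φ ∈ Set.Ioo (0 : ℝ) 1) :
    IsMaxOn
      (fun ξ : ℝ => ξ * φ * logb 2 φ - ξ * (1 - φ) * logb 2 ξ
        - (1 - ξ + ξ * φ) * logb 2 (1 - ξ + ξ * φ))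
      (Set.Icc (0 : ℝ) 1)
      (1 / (φ ^ (φ / (φ - 1)) - φ + 1)) := by
  have hmax : IsMaxOn (zChannelMutualInfo φ) (Icc 0 1) (zChannelOptimalInput φ) :=
    (concaveOn_zChannelMutualInfo (Ioo_subset_Icc_self hφ)).isMaxOn_of_hasDerivAt_eq_zero
      (by rw [interior_Icc]; exact zChannelOptimalInput_mem_Ioo hφ)
      (hasDerivAt_zChannelMutualInfo_optimalInput hφ)
  intro ξ hξ
  have hle := div_le_div_of_nonneg_right (hmax hξ) (log_nonneg one_le_two)
  rwa [zChannelMutualInfo_div_log_two, zChannelMutualInfo_div_log_two] at hle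
end

section
/- The maximum over ξ ∈ [0,1] of the Z-channel mutual information with crossover probability φ ∈ (0,1) equals log(1 + (1−φ)·φ^{φ/(1−φ)}). -/
open Real Set

/-- The maximum over `ξ ∈ [0,1]` of the Z-channel mutual information with
crossover probability `φ ∈ (0,1)` equals `log₂(1 + (1−φ)·φ^{φ/(1−φ)})`. -/
theorem zChannel_capacity
    (φ : ℝ) (hφ : φ ∈ Set.Ioo (0 : ℝ) 1) :
    IsGreatest
      ((fun ξ : ℝ => ξ * φ * logb 2 φ - ξ * (1 - φ) * logb 2 ξ
        - (1 - ξ + ξ * φ) * logb 2 (1 - ξ + ξ * φ)) '' Set.Icc (0 : ℝ) 1)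
      (logb 2 (1 + (1 - φ) * φ ^ (φ / (1 - φ)))) := by
  obtain ⟨hφ0, hφ1⟩ := hφ
  have h1φ : (0:ℝ) < 1 - φ := by linarith
  set s : ℝ := φ ^ (φ / (1 - φ)) with hs_def
  have hs0 : 0 < s := Real.rpow_pos_of_pos hφ0 _
  have hs1 : s ≤ 1 := by
    rw [hs_def]
    exact Real.rpow_le_one hφ0.le hφ1.le (div_nonneg hφ0.le h1φ.le)
  have hlogs : (1 - φ) * Real.log s = φ * Real.log φ := by
    rw [hs_def, Real.log_rpow hφ0]; field_simp
  set C : ℝ := 1 + (1 - φ) * s with hC_def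
  have hC1 : 1 < C := by nlinarith
  have hC0 : 0 < C := by linarith
  have hlog2 : (0:ℝ) < Real.log 2 := Real.log_pos (by norm_num)
  -- key inequality in natural logarithms
  have key : ∀ x : ℝ, 0 < x → x ≤ 1 →
      x * φ * Real.log φ - x * (1 - φ) * Real.log x
        - (1 - x + x * φ) * Real.log (1 - x + x * φ) ≤ Real.log C := by
    intro x hx0 hx1
    set u : ℝ := 1 - x + x * φ with hu_def
    have h1u : 1 - u = x * (1 - φ) := by rw [hu_def]; ring
    have hu0 : 0 < u := by nlinarith
    have h1u0 : 0 < 1 - u := by rw [h1u]; positivity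
    have h1 := Real.log_le_sub_one_of_pos (show (0:ℝ) < 1 / (C * u) by positivity)
    have h2 := Real.log_le_sub_one_of_pos
      (show (0:ℝ) < (1 - φ) * s / (C * (1 - u)) by positivity)
    have h1' := mul_le_mul_of_nonneg_left h1 hu0.le
    have h2' := mul_le_mul_of_nonneg_left h2 h1u0.le
    have e1 : u * (1 / (C * u) - 1) = 1 / C - u := by field_simp
    have e2 : (1 - u) * ((1 - φ) * s / (C * (1 - u)) - 1) = (1 - φ) * s / C - (1 - u) := by
      field_simp
    have e3 : 1 / C + (1 - φ) * s / C = 1 := by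
      rw [hC_def]; field_simp
    have hsum : u * Real.log (1 / (C * u))
        + (1 - u) * Real.log ((1 - φ) * s / (C * (1 - u))) ≤ 0 := by
      rw [e1] at h1'; rw [e2] at h2'; linarith
    rw [Real.log_div one_ne_zero (by positivity), Real.log_one,
        Real.log_mul hC0.ne' hu0.ne',
        Real.log_div (by positivity) (by positivity),
        Real.log_mul h1φ.ne' hs0.ne',
        Real.log_mul hC0.ne' h1u0.ne',
        h1u, Real.log_mul hx0.ne' h1φ.ne'] at hsum
    have expand : x * φ * Real.log φ - x * (1 - φ) * Real.log x - u * Real.log u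
        = Real.log C
          + (u * (0 - (Real.log C + Real.log u))
            + (x * (1 - φ)) * ((Real.log (1 - φ) + Real.log s)
              - (Real.log C + (Real.log x + Real.log (1 - φ))))) := by
      linear_combination (-x) * hlogs - Real.log C * h1u
    rw [expand]
    linarith
  -- value at the maximizer
  have hu' : 1 - s / C + (s / C) * φ = 1 / C := by
    rw [hC_def]; field_simp; ring
  have hval : (s / C) * φ * Real.log φ - (s / C) * (1 - φ) * Real.log (s / C)
      - (1 - s / C + (s / C) * φ) * Real.log (1 - s / C + (s / C) * φ) = Real.log C := by
    rw [hu', Real.log_div hs0.ne' hC0.ne', one_div, Real.log_inv]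
    field_simp
    linear_combination (-s) * hlogs
  constructor
  · refine ⟨s / C, ⟨by positivity, ?_⟩, ?_⟩
    · rw [div_le_one hC0]; nlinarith
    · show (s/C) * φ * logb 2 φ - (s/C) * (1 - φ) * logb 2 (s/C)
        - (1 - s/C + (s/C) * φ) * logb 2 (1 - s/C + (s/C) * φ) = logb 2 C
      simp only [Real.logb]
      calc (s/C) * φ * (Real.log φ / Real.log 2)
            - (s/C) * (1 - φ) * (Real.log (s/C) / Real.log 2)
            - (1 - s/C + (s/C) * φ) * (Real.log (1 - s/C + (s/C) * φ) / Real.log 2)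
          = ((s/C) * φ * Real.log φ - (s/C) * (1 - φ) * Real.log (s/C)
            - (1 - s/C + (s/C) * φ) * Real.log (1 - s/C + (s/C) * φ)) / Real.log 2 := by
            ring
        _ = Real.log C / Real.log 2 := by rw [hval]
  · rintro v ⟨x, hx, rfl⟩
    rcases eq_or_lt_of_le hx.1 with h0 | h0
    · rw [← h0]
      norm_num
      exact Real.logb_nonneg (by norm_num) hC1.le
    · have h := key x h0 hx.2
      show x * φ * logb 2 φ - x * (1 - φ) * logb 2 x
        - (1 - x + x * φ) * logb 2 (1 - x + x * φ) ≤ logb 2 C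
      simp only [Real.logb]
      calc x * φ * (Real.log φ / Real.log 2) - x * (1 - φ) * (Real.log x / Real.log 2)
          - (1 - x + x * φ) * (Real.log (1 - x + x * φ) / Real.log 2)
          = (x * φ * Real.log φ - x * (1 - φ) * Real.log x
            - (1 - x + x * φ) * Real.log (1 - x + x * φ)) / Real.log 2 := by ring
        _ ≤ Real.log C / Real.log 2 := by gcongr
end

section
/- The derivative of I(ξ) = ξφ ln φ − ξ(1−φ) ln ξ − (1−ξ+ξφ) ln(1−ξ+ξφ) with respect to ξ vanishes at ξ* = 1/(φ^{φ/(φ−1)} − φ + 1), for any φ ∈ (0,1). -/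
/-!
Differentiating, the two `+ 1` terms coming from `x log x` cancel and
`I'(ξ) = φ ln φ + (1 − φ) ln((1 − ξ + ξφ)/ξ)`. The point `ξ*` is exactly where
`(1 − ξ + ξφ)/ξ = φ^{φ/(φ−1)}`, and `(1 − φ) ln φ^{φ/(φ−1)} = −φ ln φ`.
-/

open Real

lemma hasDerivAt_zChannel_information {φ ξ : ℝ} (hξ : ξ ≠ 0) (hu : 1 - ξ + ξ * φ ≠ 0) :
    HasDerivAt
      (fun ξ : ℝ => ξ * φ * log φ - ξ * (1 - φ) * log ξ
        - (1 - ξ + ξ * φ) * log (1 - ξ + ξ * φ))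
      (φ * log φ + (1 - φ) * log ((1 - ξ + ξ * φ) / ξ)) ξ := by
  have hlin : HasDerivAt (fun ξ : ℝ => ξ * φ * log φ) (φ * log φ) ξ := by
    simpa [mul_assoc] using (hasDerivAt_id ξ).mul_const (φ * log φ)
  have hself : HasDerivAt (fun ξ : ℝ => ξ * (1 - φ) * log ξ) ((1 - φ) * (log ξ + 1)) ξ := by
    simpa [mul_comm, mul_left_comm, mul_assoc] using (hasDerivAt_mul_log hξ).const_mul (1 - φ)
  have hout : HasDerivAt (fun ξ : ℝ => 1 - ξ + ξ * φ) (φ - 1) ξ :=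
    (((hasDerivAt_id' ξ).const_sub 1).add ((hasDerivAt_id' ξ).mul_const φ)).congr_deriv (by ring)
  have hmix : HasDerivAt (fun ξ : ℝ => (1 - ξ + ξ * φ) * log (1 - ξ + ξ * φ))
      ((log (1 - ξ + ξ * φ) + 1) * (φ - 1)) ξ :=
    (hasDerivAt_mul_log hu).comp (h₂ := fun x => x * log x) ξ hout
  refine ((hlin.sub hself).sub hmix).congr_deriv ?_
  rw [log_div hu hξ]
  ring

lemma one_sub_add_mul_eq_mul_of_eq_one_div {φ c ξ : ℝ} (hc : c - φ + 1 ≠ 0)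
    (hξ : ξ = 1 / (c - φ + 1)) : 1 - ξ + ξ * φ = c * ξ := by
  subst hξ
  field_simp
  ring

lemma one_sub_mul_log_rpow_self {φ : ℝ} (hφ0 : 0 < φ) (hφ1 : φ ≠ 1) :
    (1 - φ) * log (φ ^ (φ / (φ - 1))) = -(φ * log φ) := by
  have : φ - 1 ≠ 0 := sub_ne_zero.mpr hφ1
  rw [log_rpow hφ0]
  field_simp
  ring

/-- The derivative of
`I(ξ) = ξφ ln φ − ξ(1−φ) ln ξ − (1−ξ+ξφ) ln(1−ξ+ξφ)` with respect to `ξ`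
vanishes at `ξ* = 1/(φ^{φ/(φ−1)} − φ + 1)`, for any `φ ∈ (0,1)`. -/
theorem zChannel_deriv_zero_at_optimum
    (φ : ℝ) (hφ : φ ∈ Set.Ioo (0 : ℝ) 1) :
    HasDerivAt
      (fun ξ : ℝ => ξ * φ * Real.log φ - ξ * (1 - φ) * Real.log ξ
        - (1 - ξ + ξ * φ) * Real.log (1 - ξ + ξ * φ))
      0 (1 / (φ ^ (φ / (φ - 1)) - φ + 1)) := by
  obtain ⟨hφ0, hφ1⟩ := hφ
  set c := φ ^ (φ / (φ - 1))
  have hc : 0 < c := rpow_pos_of_pos hφ0 _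
  set ξ := 1 / (c - φ + 1) with hξ_def
  have hξ : 0 < ξ := one_div_pos.mpr (by linarith)
  have hu : 1 - ξ + ξ * φ = c * ξ := one_sub_add_mul_eq_mul_of_eq_one_div (by linarith) hξ_def
  have hratio : (1 - ξ + ξ * φ) / ξ = c := by rw [hu, mul_div_cancel_right₀ _ hξ.ne']
  refine (hasDerivAt_zChannel_information hξ.ne' (by rw [hu]; positivity)).congr_deriv ?_
  rw [hratio, one_sub_mul_log_rpow_self hφ0 hφ1.ne]
  ring
end

section
/- The Z-channel capacity C(φ) = log₂(1 + (1−φ)·φ^{φ/(1−φ)}) is strictly decreasing in φ on (0,1). -/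
/-!
Write `(1 - φ) φ ^ (φ / (1 - φ)) = exp g(φ)` with `g φ = log (1 - φ) + φ / (1 - φ) * log φ`.
Differentiating, the term `-1 / (1 - φ)` coming from `log (1 - φ)` cancels against
`φ / (1 - φ) * (1 / φ)`, leaving `g' φ = log φ / (1 - φ) ^ 2 < 0` on `(0, 1)`.
Since `t ↦ log₂ (1 + exp t)` is strictly increasing, the capacity is strictly decreasing.
-/

open Real

noncomputable def zChannelLogGain (φ : ℝ) : ℝ := log (1 - φ) + φ / (1 - φ) * log φ

theorem hasDerivAt_zChannelLogGain {x : ℝ} (hx₀ : x ≠ 0) (hx₁ : x ≠ 1) :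
    HasDerivAt zChannelLogGain (log x / (1 - x) ^ 2) x := by
  have h1x : 1 - x ≠ 0 := sub_ne_zero.mpr hx₁.symm
  have hsub : HasDerivAt (fun φ : ℝ => 1 - φ) (-1) x := by
    simpa using (hasDerivAt_id x).const_sub 1
  have hratio : HasDerivAt (fun φ : ℝ => φ / (1 - φ)) ((1 * (1 - x) - x * -1) / (1 - x) ^ 2) x :=
    (hasDerivAt_id x).div hsub h1x
  refine ((hsub.log h1x).add (hratio.mul (hasDerivAt_log hx₀))).congr_deriv ?_
  field_simp
  ring

theorem strictAntiOn_zChannelLogGain : StrictAntiOn zChannelLogGain (Set.Ioo 0 1) := by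
  refine strictAntiOn_of_deriv_neg (convex_Ioo 0 1) ?_ ?_
  · exact fun x hx =>
      (hasDerivAt_zChannelLogGain hx.1.ne' hx.2.ne).continuousAt.continuousWithinAt
  · intro x hx
    rw [interior_Ioo] at hx
    rw [(hasDerivAt_zChannelLogGain hx.1.ne' hx.2.ne).deriv]
    exact div_neg_of_neg_of_pos (log_neg hx.1 hx.2) (by nlinarith [hx.2])

theorem one_sub_mul_rpow_eq_exp_zChannelLogGain {φ : ℝ} (h₀ : 0 < φ) (h₁ : φ < 1) :
    (1 - φ) * φ ^ (φ / (1 - φ)) = exp (zChannelLogGain φ) := by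
  rw [zChannelLogGain, exp_add, exp_log (sub_pos.mpr h₁), rpow_def_of_pos h₀, mul_comm (log φ)]

theorem strictMono_logb_two_one_add_exp : StrictMono fun t : ℝ => logb 2 (1 + exp t) :=
  fun _ _ hst => logb_lt_logb one_lt_two (by positivity) (by gcongr)

/-- The Z-channel capacity `C(φ) = log₂(1 + (1−φ)·φ^{φ/(1−φ)})` is strictly
decreasing in the crossover probability `φ` on `(0,1)`. -/
theorem zChannel_capacity_strictAnti :
    StrictAntiOn (fun φ : ℝ => logb 2 (1 + (1 - φ) * φ ^ (φ / (1 - φ))))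
      (Set.Ioo (0 : ℝ) 1) :=
  (strictMono_logb_two_one_add_exp.comp_strictAntiOn strictAntiOn_zChannelLogGain).congr
    fun _ hφ => by simp only [Function.comp_apply,
      one_sub_mul_rpow_eq_exp_zChannelLogGain hφ.1 hφ.2]
end

section
/- Consider a discrete memoryless channel with input alphabet {0,1,...,m} and channel law P(Y=y | X=x) = C(m,y)·(xθ/m)^y·(1−xθ/m)^{m−y} for θ ∈ (0,1). Any input distribution P maximizing I(X;Y) satisfies P(0) > 0. -/
open Real Finset

/-- The binomial particle-intensity channel law:
`P(Y = y | X = x) = C(m,y) (xθ/m)^y (1 − xθ/m)^{m−y}`. -/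
noncomputable def picChannel (m : ℕ) (θ : ℝ) (x y : ℕ) : ℝ :=
  (m.choose y : ℝ) * ((x : ℝ) * θ / m) ^ y * (1 - (x : ℝ) * θ / m) ^ (m - y)

/-- The output marginal of the channel under input distribution `P`. -/
noncomputable def picOut (m : ℕ) (θ : ℝ) (P : ℕ → ℝ) (y : ℕ) : ℝ :=
  ∑ x ∈ range (m + 1), P x * picChannel m θ x y

/-- The mutual information `I(X;Y)` (in bits) of the channel `picChannel m θ`
under input distribution `P` on `{0,…,m}`, with the convention `0 log 0 = 0`
(satisfied by `Real.logb`). -/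
noncomputable def picMutInfo (m : ℕ) (θ : ℝ) (P : ℕ → ℝ) : ℝ :=
  ∑ x ∈ range (m + 1), ∑ y ∈ range (m + 1),
    P x * picChannel m θ x y *
      Real.logb 2 (picChannel m θ x y / picOut m θ P y)

/-- `P` is a probability mass function on `{0,…,m}`. -/
def IsPMFOn (m : ℕ) (P : ℕ → ℝ) : Prop :=
  (∀ x, 0 ≤ P x) ∧ ∑ x ∈ range (m + 1), P x = 1 ∧ ∀ x, m < x → P x = 0

/-!
An optimal input `P` satisfies the first-order (Kuhn–Tucker) conditions: every input `b` has
`D(W_b ‖ P_Y) ≤ I(P)`, with equality on the support of `P`. Suppose `P 0 = 0` and let `a ≥ 1` be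
the least input in the support. The binomial channel has monotone likelihood ratios, so every
`x ≥ a` has `W_x(y) / W_x(0) ≥ W_a(y) / W_a(0)`, hence `P_Y(y) / P_Y(0) ≥ W_a(y) / W_a(0)` and
`I(P) = D(W_a ‖ P_Y) ≤ log (W_a(0) / P_Y(0)) < log (1 / P_Y(0)) = D(W_0 ‖ P_Y) ≤ I(P)`,
because `W_a(0) = (1 - aθ/m)^m < 1` and input `0` is received noiselessly.
-/

open Filter Topology

theorem Finset.apply_eq_sum_mul_of_forall_le {ι : Type*} {s : Finset ι} {w f : ι → ℝ}
    (hw : ∀ i ∈ s, 0 ≤ w i) (hw1 : ∑ i ∈ s, w i = 1) (hf : ∀ i ∈ s, f i ≤ ∑ j ∈ s, w j * f j)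
    {i : ι} (hi : i ∈ s) (hwi : 0 < w i) : f i = ∑ j ∈ s, w j * f j := by
  set c := ∑ j ∈ s, w j * f j
  have hzero : ∑ j ∈ s, w j * (c - f j) = 0 := by
    simp only [mul_sub, sum_sub_distrib, ← sum_mul, hw1, one_mul, c, sub_self]
  have := (sum_eq_zero_iff_of_nonneg fun j hj => mul_nonneg (hw j hj) (sub_nonneg.2 (hf j hj))).1
    hzero i hi
  have := (mul_eq_zero.1 this).resolve_left hwi.ne'
  linarith

theorem binomial_weight_mul_le {m y : ℕ} (hy : y ≤ m) {l u : ℝ} (hl : 0 ≤ l) (hlu : l ≤ u)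
    (hu : u ≤ 1) :
    l ^ y * (1 - l) ^ (m - y) * (1 - u) ^ m ≤ u ^ y * (1 - u) ^ (m - y) * (1 - l) ^ m := by
  have hcross : l * (1 - u) ≤ u * (1 - l) := by nlinarith
  rw [← pow_sub_mul_pow (1 - u) hy, ← pow_sub_mul_pow (1 - l) hy]
  calc l ^ y * (1 - l) ^ (m - y) * ((1 - u) ^ (m - y) * (1 - u) ^ y)
      = (l * (1 - u)) ^ y * ((1 - l) ^ (m - y) * (1 - u) ^ (m - y)) := by rw [mul_pow]; ring
    _ ≤ (u * (1 - l)) ^ y * ((1 - l) ^ (m - y) * (1 - u) ^ (m - y)) := by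
      have : 0 ≤ 1 - l := by linarith
      have : 0 ≤ 1 - u := by linarith
      gcongr
    _ = _ := by rw [mul_pow]; ring

namespace FiniteChannel

variable {α β : Type*} (s : Finset α) (t : Finset β) (W : α → β → ℝ)

noncomputable def outputDist (P : α → ℝ) (y : β) : ℝ := ∑ x ∈ s, P x * W x y

noncomputable def relEntropy (p q : β → ℝ) : ℝ := ∑ y ∈ t, p y * logb 2 (p y / q y)

noncomputable def mutualInfo (P : α → ℝ) : ℝ :=
  ∑ x ∈ s, P x * relEntropy t (W x) (outputDist s W P)

section relEntropy

variable {t} {p q : β → ℝ}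

theorem relEntropy_le_logb_of_le {c : ℝ} (hp : ∀ y ∈ t, 0 ≤ p y) (hp1 : ∑ y ∈ t, p y = 1)
    (hq : ∀ y ∈ t, 0 < q y) (hpq : ∀ y ∈ t, p y ≤ c * q y) : relEntropy t p q ≤ logb 2 c := by
  calc relEntropy t p q ≤ ∑ y ∈ t, p y * logb 2 c := by
        refine sum_le_sum fun y hy => ?_
        rcases (hp y hy).eq_or_lt with h | h
        · simp [← h]
        · exact mul_le_mul_of_nonneg_left (logb_le_logb_of_le one_lt_two
            (div_pos h (hq y hy)) ((div_le_iff₀ (hq y hy)).2 (hpq y hy))) h.le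
    _ = logb 2 c := by rw [← sum_mul, hp1, one_mul]

theorem relEntropy_le_chiSq (hp : ∀ y ∈ t, 0 ≤ p y) (hq : ∀ y ∈ t, 0 < q y)
    (hpq : ∑ y ∈ t, p y = ∑ y ∈ t, q y) :
    relEntropy t p q ≤ (∑ y ∈ t, (p y - q y) ^ 2 / q y) / log 2 := by
  have key : ∀ y ∈ t,
      p y * logb 2 (p y / q y) ≤ ((p y - q y) ^ 2 / q y + (p y - q y)) / log 2 := by
    intro y hy
    have hqy := hq y hy
    have hsq : (p y - q y) ^ 2 / q y + (p y - q y) = p y * (p y / q y - 1) := by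
      field_simp; ring
    rw [logb, ← mul_div_assoc, hsq]
    refine div_le_div_of_nonneg_right ?_ (log_pos one_lt_two).le
    rcases (hp y hy).eq_or_lt with h | h
    · simp [← h]
    · exact mul_le_mul_of_nonneg_left (log_le_sub_one_of_pos (div_pos h hqy)) h.le
  calc relEntropy t p q
      ≤ ∑ y ∈ t, ((p y - q y) ^ 2 / q y + (p y - q y)) / log 2 := sum_le_sum key
    _ = _ := by rw [← sum_div, sum_add_distrib, sum_sub_distrib, hpq, sub_self, add_zero]

end relEntropy

theorem sum_outputDist (hW : ∀ x ∈ s, ∑ y ∈ t, W x y = 1) (P : α → ℝ) :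
    ∑ y ∈ t, outputDist s W P y = ∑ x ∈ s, P x := by
  simp only [outputDist]
  rw [sum_comm]
  exact sum_congr rfl fun x hx => by rw [← mul_sum, hW x hx, mul_one]

theorem outputDist_mix [DecidableEq α] {b : α} (hb : b ∈ s) (P : α → ℝ) (ε : ℝ) (y : β) :
    outputDist s W ((1 - ε) • P + ε • Pi.single b 1) y
      = (1 - ε) * outputDist s W P y + ε * W b y := by
  simp [outputDist, add_mul, sum_add_distrib, mul_sum, Pi.single_apply, hb, mul_assoc]

theorem mutualInfo_eq_sum_sub_relEntropy {P Q : α → ℝ} (hP : ∀ y ∈ t, 0 < outputDist s W P y)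
    (hQ : ∀ y ∈ t, 0 < outputDist s W Q y) :
    mutualInfo s t W Q = ∑ x ∈ s, Q x * relEntropy t (W x) (outputDist s W P)
      - relEntropy t (outputDist s W Q) (outputDist s W P) := by
  have hsplit : ∀ x, ∀ y ∈ t, W x y * logb 2 (W x y / outputDist s W Q y)
      = W x y * logb 2 (W x y / outputDist s W P y)
        - W x y * logb 2 (outputDist s W Q y / outputDist s W P y) := by
    intro x y hy
    rcases eq_or_ne (W x y) 0 with h | h
    · simp [h]
    · rw [← mul_sub, logb_div h (hQ y hy).ne', logb_div h (hP y hy).ne',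
        logb_div (hQ y hy).ne' (hP y hy).ne']
      ring
  have hL : relEntropy t (outputDist s W Q) (outputDist s W P)
      = ∑ x ∈ s, Q x * ∑ y ∈ t, W x y * logb 2 (outputDist s W Q y / outputDist s W P y) := by
    simp only [relEntropy, outputDist, sum_mul, mul_sum]
    rw [sum_comm]
    simp only [mul_assoc]
  rw [hL, mutualInfo, ← sum_sub_distrib]
  refine sum_congr rfl fun x _ => ?_
  rw [← mul_sub, relEntropy, relEntropy, ← sum_sub_distrib, sum_congr rfl (hsplit x)]

variable {s t W}

/-- As `I(Q) = ∑ Q_x D(W_x ‖ P_Y) - D(Q_Y ‖ P_Y)`, the loss is at most the `χ²`-divergence of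
`Q_Y` from `P_Y`, and `Q_Y - P_Y = ε (W_b - P_Y)`. -/
theorem le_mutualInfo_mix [DecidableEq α] (hW0 : ∀ x ∈ s, ∀ y ∈ t, 0 ≤ W x y)
    (hW1 : ∀ x ∈ s, ∑ y ∈ t, W x y = 1) {P : α → ℝ} (hP1 : ∑ x ∈ s, P x = 1)
    (hPY : ∀ y ∈ t, 0 < outputDist s W P y) {b : α} (hb : b ∈ s) {ε : ℝ} (hε0 : 0 ≤ ε)
    (hε1 : ε < 1) :
    (1 - ε) * mutualInfo s t W P + ε * relEntropy t (W b) (outputDist s W P)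
        - ε ^ 2 * ((∑ y ∈ t, (W b y - outputDist s W P y) ^ 2 / outputDist s W P y) / log 2)
      ≤ mutualInfo s t W ((1 - ε) • P + ε • Pi.single b 1) := by
  set Q := (1 - ε) • P + ε • Pi.single b 1
  have hQY : ∀ y, outputDist s W Q y = (1 - ε) * outputDist s W P y + ε * W b y :=
    outputDist_mix s W hb P ε
  have hQYpos : ∀ y ∈ t, 0 < outputDist s W Q y := fun y hy => by
    rw [hQY]
    have := hPY y hy
    have := hW0 b hb y hy
    nlinarith
  have hsum : ∑ x ∈ s, Q x * relEntropy t (W x) (outputDist s W P)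
      = (1 - ε) * mutualInfo s t W P + ε * relEntropy t (W b) (outputDist s W P) := by
    simp [Q, add_mul, sum_add_distrib, mul_sum, Pi.single_apply, hb, mutualInfo, mul_assoc]
  have hmass : ∑ y ∈ t, outputDist s W Q y = ∑ y ∈ t, outputDist s W P y := by
    simp only [sum_outputDist s t W hW1, Q, Pi.add_apply, Pi.smul_apply, smul_eq_mul,
      sum_add_distrib, ← mul_sum, hP1, Pi.single_apply, sum_ite_eq', hb, if_true]
    ring
  have hchi := relEntropy_le_chiSq (fun y hy => (hQYpos y hy).le) hPY hmass
  simp only [hQY] at hchi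
  rw [mutualInfo_eq_sum_sub_relEntropy s t W hPY hQYpos, hsum]
  have hK : ∑ y ∈ t, ((1 - ε) * outputDist s W P y + ε * W b y - outputDist s W P y) ^ 2
        / outputDist s W P y
      = ε ^ 2 * ∑ y ∈ t, (W b y - outputDist s W P y) ^ 2 / outputDist s W P y := by
    rw [mul_sum]
    exact sum_congr rfl fun y _ => by ring
  rw [hK, mul_div_assoc] at hchi
  linarith

theorem relEntropy_le_mutualInfo_of_mix_le [DecidableEq α] (hW0 : ∀ x ∈ s, ∀ y ∈ t, 0 ≤ W x y)
    (hW1 : ∀ x ∈ s, ∑ y ∈ t, W x y = 1) {P : α → ℝ} (hP1 : ∑ x ∈ s, P x = 1)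
    (hPY : ∀ y ∈ t, 0 < outputDist s W P y) {b : α} (hb : b ∈ s)
    (hmax : ∀ ε ∈ Set.Ioo (0 : ℝ) 1,
      mutualInfo s t W ((1 - ε) • P + ε • Pi.single b 1) ≤ mutualInfo s t W P) :
    relEntropy t (W b) (outputDist s W P) ≤ mutualInfo s t W P := by
  set K := (∑ y ∈ t, (W b y - outputDist s W P y) ^ 2 / outputDist s W P y) / log 2
  have hgain : ∀ ε ∈ Set.Ioo (0 : ℝ) 1,
      relEntropy t (W b) (outputDist s W P) - mutualInfo s t W P ≤ ε * K := by
    rintro ε ⟨hε0, hε1⟩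
    have h := (le_mutualInfo_mix hW0 hW1 hP1 hPY hb hε0.le hε1).trans (hmax ε ⟨hε0, hε1⟩)
    refine le_of_mul_le_mul_left ?_ hε0
    linarith
  have hlim : Tendsto (fun ε => ε * K) (𝓝[>] 0) (𝓝 0) := by
    simpa using ((tendsto_id (x := 𝓝 (0 : ℝ))).mul_const K).mono_left nhdsWithin_le_nhds
  have := ge_of_tendsto hlim (eventually_of_mem (Ioo_mem_nhdsGT one_pos) hgain)
  linarith

end FiniteChannel

section picChannel

variable {m x y : ℕ} {θ : ℝ}

theorem natCast_mul_div_natCast_le (hx : x ≤ m) (hθ : 0 ≤ θ) : (x : ℝ) * θ / m ≤ θ :=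
  div_le_of_le_mul₀ m.cast_nonneg hθ (by rw [mul_comm]; gcongr)

theorem picChannel_nonneg (hθ0 : 0 ≤ θ) (hθ1 : θ ≤ 1) (hx : x ≤ m) :
    0 ≤ picChannel m θ x y := by
  have := natCast_mul_div_natCast_le hx hθ0
  have : 0 ≤ 1 - (x : ℝ) * θ / m := by linarith
  unfold picChannel
  positivity

theorem picChannel_pos (hθ0 : 0 < θ) (hθ1 : θ < 1) (hx0 : x ≠ 0) (hx : x ≤ m) (hy : y ≤ m) :
    0 < picChannel m θ x y := by
  have := natCast_mul_div_natCast_le hx hθ0.le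
  have : 0 < 1 - (x : ℝ) * θ / m := by linarith
  have : 0 < m := by omega
  have := Nat.choose_pos hy
  unfold picChannel
  positivity

theorem sum_picChannel (m : ℕ) (θ : ℝ) (x : ℕ) :
    ∑ y ∈ range (m + 1), picChannel m θ x y = 1 := by
  have h := (add_pow ((x : ℝ) * θ / m) (1 - x * θ / m) m).symm
  rw [add_sub_cancel, one_pow] at h
  rw [← h]
  exact sum_congr rfl fun y _ => by unfold picChannel; ring

theorem picChannel_zero_left : picChannel m θ 0 y = if y = 0 then 1 else 0 := by
  rcases eq_or_ne y 0 with rfl | hy <;> simp [picChannel, *]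

theorem picChannel_zero_right : picChannel m θ x 0 = (1 - x * θ / m) ^ m := by
  simp [picChannel]

theorem picChannel_zero_right_lt_one (hθ0 : 0 < θ) (hθ1 : θ < 1) (hx0 : x ≠ 0) (hx : x ≤ m) :
    picChannel m θ x 0 < 1 := by
  have := natCast_mul_div_natCast_le hx hθ0.le
  have : 0 < m := by omega
  have : 0 < (x : ℝ) * θ / m := by positivity
  rw [picChannel_zero_right]
  exact pow_lt_one₀ (by linarith) (by linarith) (by omega)

/-- The channel has monotone likelihood ratios: `W_x(y) / W_x(0)` increases with `x`. -/
theorem picChannel_mul_le_mul {a : ℕ} (hθ0 : 0 ≤ θ) (hθ1 : θ ≤ 1) (hax : a ≤ x) (hx : x ≤ m)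
    (hy : y ≤ m) :
    picChannel m θ a y * picChannel m θ x 0 ≤ picChannel m θ x y * picChannel m θ a 0 := by
  have hrate : (a : ℝ) * θ / m ≤ x * θ / m := by gcongr
  have := binomial_weight_mul_le hy (by positivity) hrate
    ((natCast_mul_div_natCast_le hx hθ0).trans hθ1)
  rw [picChannel_zero_right, picChannel_zero_right]
  unfold picChannel
  calc _ = (m.choose y : ℝ) * (((a : ℝ) * θ / m) ^ y * (1 - a * θ / m) ^ (m - y)
        * (1 - x * θ / m) ^ m) := by ring
    _ ≤ (m.choose y : ℝ) * (((x : ℝ) * θ / m) ^ y * (1 - x * θ / m) ^ (m - y)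
        * (1 - a * θ / m) ^ m) := by gcongr
    _ = _ := by ring

end picChannel

open FiniteChannel

theorem picOut_eq_outputDist (m : ℕ) (θ : ℝ) (P : ℕ → ℝ) :
    picOut m θ P = outputDist (range (m + 1)) (picChannel m θ) P := rfl

theorem picMutInfo_eq_mutualInfo (m : ℕ) (θ : ℝ) (P : ℕ → ℝ) :
    picMutInfo m θ P = mutualInfo (range (m + 1)) (range (m + 1)) (picChannel m θ) P := by
  simp only [picMutInfo, mutualInfo, relEntropy, mul_sum, mul_assoc, picOut_eq_outputDist]

namespace IsPMFOn

variable {m : ℕ} {P : ℕ → ℝ}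

theorem mix (hP : IsPMFOn m P) {b : ℕ} (hb : b ≤ m) {ε : ℝ} (hε : ε ∈ Set.Icc (0 : ℝ) 1) :
    IsPMFOn m ((1 - ε) • P + ε • Pi.single b 1) := by
  obtain ⟨hP0, hP1, hPm⟩ := hP
  obtain ⟨hε0, hε1⟩ := hε
  refine ⟨fun x => ?_, ?_, fun x hx => ?_⟩
  · have := hP0 x
    have : 0 ≤ (1 - ε) * P x := mul_nonneg (by linarith) this
    simp only [Pi.add_apply, Pi.smul_apply, smul_eq_mul, Pi.single_apply]
    split_ifs <;> linarith
  · simp [sum_add_distrib, ← mul_sum, hP1, Pi.single_apply, Nat.lt_succ_of_le hb]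
  · have hxb : x ≠ b := by omega
    simp [hPm x hx, Pi.single_eq_of_ne hxb]

theorem exists_first_pos (hP : IsPMFOn m P) : ∃ a ≤ m, 0 < P a ∧ ∀ x < a, P x = 0 := by
  classical
  obtain ⟨hP0, hP1, hPm⟩ := hP
  have hex : ∃ x, 0 < P x := by
    by_contra! h
    linarith [sum_nonpos fun x (_ : x ∈ range (m + 1)) => h x]
  refine ⟨Nat.find hex, not_lt.1 fun h => ?_, Nat.find_spec hex, fun x hx => ?_⟩
  · exact (Nat.find_spec hex).ne' (hPm _ h)
  · exact le_antisymm (not_lt.1 (Nat.find_min hex hx)) (hP0 x)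

end IsPMFOn

section picOut

variable {m a y : ℕ} {θ : ℝ} {P : ℕ → ℝ}

theorem picOut_pos (hθ0 : 0 < θ) (hθ1 : θ < 1) (hP0 : ∀ x, 0 ≤ P x) (ha0 : a ≠ 0) (ham : a ≤ m)
    (hPa : 0 < P a) (hy : y ≤ m) : 0 < picOut m θ P y :=
  sum_pos' (fun x hx => mul_nonneg (hP0 x)
      (picChannel_nonneg hθ0.le hθ1.le (Nat.lt_succ_iff.1 (mem_range.1 hx))))
    ⟨a, mem_range.2 (Nat.lt_succ_of_le ham), mul_pos hPa (picChannel_pos hθ0 hθ1 ha0 ham hy)⟩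

theorem picChannel_mul_picOut_le (hθ0 : 0 ≤ θ) (hθ1 : θ ≤ 1) (hP0 : ∀ x, 0 ≤ P x)
    (hmin : ∀ x < a, P x = 0) (hy : y ≤ m) :
    picChannel m θ a y * picOut m θ P 0 ≤ picChannel m θ a 0 * picOut m θ P y := by
  unfold picOut
  rw [mul_sum, mul_sum]
  refine sum_le_sum fun x hx => ?_
  rcases lt_or_ge x a with hxa | hax
  · simp [hmin x hxa]
  · have hxm := Nat.lt_succ_iff.1 (mem_range.1 hx)
    calc picChannel m θ a y * (P x * picChannel m θ x 0)
        = P x * (picChannel m θ a y * picChannel m θ x 0) := by ring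
      _ ≤ P x * (picChannel m θ x y * picChannel m θ a 0) :=
        mul_le_mul_of_nonneg_left (picChannel_mul_le_mul hθ0 hθ1 hax hxm hy) (hP0 x)
      _ = _ := by ring

end picOut

theorem relEntropy_picChannel_zero (m : ℕ) (θ : ℝ) (q : ℕ → ℝ) :
    relEntropy (range (m + 1)) (picChannel m θ 0) q = -logb 2 (q 0) := by
  simp [relEntropy, picChannel_zero_left]

theorem relEntropy_picChannel_le_picMutInfo {m : ℕ} {θ : ℝ} (hθ0 : 0 ≤ θ) (hθ1 : θ ≤ 1)
    {P : ℕ → ℝ} (hP : IsPMFOn m P)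
    (hopt : ∀ Q : ℕ → ℝ, IsPMFOn m Q → picMutInfo m θ Q ≤ picMutInfo m θ P)
    (hq : ∀ y ∈ range (m + 1), 0 < picOut m θ P y) {b : ℕ} (hb : b ∈ range (m + 1)) :
    relEntropy (range (m + 1)) (picChannel m θ b) (picOut m θ P) ≤ picMutInfo m θ P := by
  simp only [picMutInfo_eq_mutualInfo] at hopt ⊢
  refine relEntropy_le_mutualInfo_of_mix_le
    (fun x hx y _ => picChannel_nonneg hθ0 hθ1 (Nat.lt_succ_iff.1 (mem_range.1 hx)))
    (fun x _ => sum_picChannel m θ x) hP.2.1 hq hb fun ε hε => hopt _ (hP.mix ?_ ?_)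
  · exact Nat.lt_succ_iff.1 (mem_range.1 hb)
  · exact Set.Ioo_subset_Icc_self hε

theorem pic_optimal_input_pos_at_zero_general
    (m : ℕ) (θ : ℝ) (hθ : θ ∈ Set.Ioo (0 : ℝ) 1)
    (P : ℕ → ℝ) (hP : IsPMFOn m P)
    (hopt : ∀ Q : ℕ → ℝ, IsPMFOn m Q → picMutInfo m θ Q ≤ picMutInfo m θ P) :
    0 < P 0 := by
  obtain ⟨hθ0, hθ1⟩ := hθ
  by_contra hneg
  obtain ⟨a, ham, hPa, hmin⟩ := hP.exists_first_pos
  have ha0 : a ≠ 0 := by rintro rfl; exact hneg hPa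
  have hmem : ∀ {y}, y ∈ range (m + 1) → y ≤ m := fun hy => Nat.lt_succ_iff.1 (mem_range.1 hy)
  set q := picOut m θ P
  have hq : ∀ y ∈ range (m + 1), 0 < q y := fun y hy =>
    picOut_pos hθ0 hθ1 hP.1 ha0 ham hPa (hmem hy)
  have hD := fun b => relEntropy_picChannel_le_picMutInfo hθ0.le hθ1.le hP hopt hq (b := b)
  have hDa : relEntropy (range (m + 1)) (picChannel m θ a) q = picMutInfo m θ P := by
    rw [picMutInfo_eq_mutualInfo] at hD ⊢
    exact apply_eq_sum_mul_of_forall_le (fun x _ => hP.1 x) hP.2.1 hD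
      (mem_range.2 (Nat.lt_succ_of_le ham)) hPa
  have hDa_le : relEntropy (range (m + 1)) (picChannel m θ a) q
      ≤ logb 2 (picChannel m θ a 0 / q 0) :=
    relEntropy_le_logb_of_le (fun y _ => picChannel_nonneg hθ0.le hθ1.le ham)
      (sum_picChannel m θ a) hq fun y hy => by
        rw [div_mul_eq_mul_div, le_div_iff₀ (hq 0 (by simp))]
        exact picChannel_mul_picOut_le hθ0.le hθ1.le hP.1 hmin (hmem hy)
  have hD0 := hD (b := 0) (by simp)
  rw [relEntropy_picChannel_zero] at hD0
  have hWa0 := logb_neg one_lt_two (picChannel_pos hθ0 hθ1 ha0 ham (Nat.zero_le m))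
    (picChannel_zero_right_lt_one hθ0 hθ1 ha0 ham)
  rw [logb_div (picChannel_pos hθ0 hθ1 ha0 ham (Nat.zero_le m)).ne' (hq 0 (by simp)).ne']
    at hDa_le
  linarith

/-- Any input distribution maximizing the mutual information of the binomial
particle-intensity channel puts positive mass on the symbol `0`. -/
theorem pic_optimal_input_pos_at_zero
    (m : ℕ) (hm : 1 ≤ m) (θ : ℝ) (hθ : θ ∈ Set.Ioo (0 : ℝ) 1)
    (P : ℕ → ℝ) (hP : IsPMFOn m P)
    (hopt : ∀ Q : ℕ → ℝ, IsPMFOn m Q → picMutInfo m θ Q ≤ picMutInfo m θ P) :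
    0 < P 0 :=
  pic_optimal_input_pos_at_zero_general m θ hθ P hP hopt
end

section
/- For φ ∈ (0,1), the optimal input probability ξ*(φ) = 1/(φ^{φ/(φ−1)} − φ + 1) for the Z-channel satisfies ξ*(φ) < 1/2 for all φ ∈ (0,1). -/
/-- For every `φ ∈ (0,1)`, the optimal Z-channel input probability
`ξ*(φ) = 1/(φ^{φ/(φ−1)} − φ + 1)` is strictly less than `1/2`: it is always
optimal to send the nonzero symbol less than half the time. -/
theorem zChannel_optimal_input_lt_half
    (φ : ℝ) (hφ : φ ∈ Set.Ioo (0 : ℝ) 1) :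
    1 / (φ ^ (φ / (φ - 1)) - φ + 1) < 1 / 2 := by
  obtain ⟨h0, h1⟩ := hφ
  have hφ1 : φ - 1 < 0 := by linarith
  -- log φ < φ - 1 (strict since φ ≠ 1)
  have hlog : Real.log φ < φ - 1 := Real.log_lt_sub_one_of_pos h0 (by linarith)
  -- hence log φ / (φ - 1) > 1
  have hdiv : 1 < Real.log φ / (φ - 1) := by
    rw [lt_div_iff_of_neg hφ1]; linarith
  -- log (1+φ) < φ
  have hlog2 : Real.log (1 + φ) < φ :=
    lt_of_lt_of_eq (Real.log_lt_sub_one_of_pos (by linarith) (by linarith)) (by ring)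
  -- key: φ^(φ/(φ-1)) > 1 + φ
  have key : 1 + φ < φ ^ (φ / (φ - 1)) := by
    rw [Real.rpow_def_of_pos h0, mul_comm]
    have h1φ : (0:ℝ) < 1 + φ := by linarith
    calc 1 + φ = Real.exp (Real.log (1 + φ)) := (Real.exp_log h1φ).symm
      _ < Real.exp (φ / (φ - 1) * Real.log φ) := by
          apply Real.exp_lt_exp.2
          have : φ < φ * (Real.log φ / (φ - 1)) := by
            nlinarith [hdiv, h0]
          calc Real.log (1 + φ) < φ := hlog2
            _ < φ * (Real.log φ / (φ - 1)) := this
            _ = φ / (φ - 1) * Real.log φ := by ring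
  have hA : 2 < φ ^ (φ / (φ - 1)) - φ + 1 := by linarith
  rw [div_lt_div_iff₀ (by linarith) (by norm_num)]
  linarith
end
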